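/- Let Φ₂(a, b, ρ) be the joint CDF of a bivariate standard Gaussian with correlation ρ, and define the Gaussian copula term C(a, b, ρ) = Φ₂(a, b, ρ) − Φ(a)Φ(b). Then |C(a, b, ρ)| ≤ (|ρ|/4)·exp(−(a² + b²)/4) for all a, b ∈ ℝ and ρ ∈ [−1, 1]. -/

import Mathlib

open MeasureTheory Real

/-- The standard normal probability density function. -/
noncomputable def stdGaussianPDF (t : ℝ) : ℝ :=
  (Real.sqrt (2 * Real.pi))⁻¹ * Real.exp (-t ^ 2 / 2)

/-- The standard normal cumulative distribution function. -/
noncomputable def stdNormalCDF (x : ℝ) : ℝ :=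
  ∫ t in Set.Iic x, stdGaussianPDF t

/-- Joint CDF of the bivariate standard Gaussian with correlation `ρ`, defined via the
representation `(z₁, z₂) = (X, ρX + √(1−ρ²)Y)` with `X, Y` independent standard Gaussians
(valid for all `ρ ∈ [−1,1]`). -/
noncomputable def bivStdNormalCDF (a b ρ : ℝ) : ℝ :=
  ∫ p in {q : ℝ × ℝ | q.1 ≤ a ∧ ρ * q.1 + Real.sqrt (1 - ρ ^ 2) * q.2 ≤ b},
    stdGaussianPDF p.1 * stdGaussianPDF p.2

/-!
For `|ρ| < 1`, `Φ₂(a, b, ρ) = ∫_{x ≤ a} φ(x) Φ((b - ρx)/√(1 - ρ²)) dx`. Differentiating under the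
integral sign, the `ρ`-derivative of the integrand turns out to be the `x`-derivative of the
bivariate density `φ₂(ρ; x, b)`, which gives Plackett's identity `∂Φ₂/∂ρ = φ₂(ρ; a, b)`. As
`Φ₂(a, b, 0) = Φ(a)Φ(b)`, the copula term is `∫₀^ρ φ₂(t; a, b) dt`. The exponent of `φ₂` is at
most `-(a² + b²)/4`, so the integrand is at most `e^{-(a²+b²)/4} / (2π√(1 - t²))`, whose integral
is `e^{-(a²+b²)/4} arcsin ρ / (2π)`, and `|arcsin ρ| ≤ π|ρ|/2`. The endpoints `ρ = ±1` follow
because `Φ₂` is continuous in `ρ` on `[-1, 1]` (dominated convergence).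
-/

open Set Filter Topology ProbabilityTheory

lemma one_sub_sq_pos_of_abs_lt {t : ℝ} (ht : |t| < 1) : 0 < 1 - t ^ 2 :=
  sub_pos.2 ((sq_lt_one_iff_abs_lt_one t).2 ht)

lemma stdGaussianPDF_eq_gaussianPDFReal : stdGaussianPDF = gaussianPDFReal 0 1 := by
  ext x
  simp [stdGaussianPDF, gaussianPDFReal]

lemma stdGaussianPDF_nonneg (x : ℝ) : 0 ≤ stdGaussianPDF x := by
  unfold stdGaussianPDF; positivity

@[fun_prop]
lemma continuous_stdGaussianPDF : Continuous stdGaussianPDF := by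
  unfold stdGaussianPDF; fun_prop

lemma integrable_stdGaussianPDF : Integrable stdGaussianPDF := by
  rw [stdGaussianPDF_eq_gaussianPDFReal]; exact integrable_gaussianPDFReal 0 1

lemma integral_stdGaussianPDF : ∫ x, stdGaussianPDF x = 1 := by
  rw [stdGaussianPDF_eq_gaussianPDFReal]; exact integral_gaussianPDFReal_eq_one 0 one_ne_zero

lemma stdNormalCDF_eq_cdf : stdNormalCDF = cdf (gaussianReal 0 1) := by
  ext x
  rw [cdf_eq_real, measureReal_def, gaussianReal_apply_eq_integral 0 one_ne_zero,
    ENNReal.toReal_ofReal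
      (setIntegral_nonneg measurableSet_Iic fun t _ => gaussianPDFReal_nonneg 0 1 t),
    stdNormalCDF, stdGaussianPDF_eq_gaussianPDFReal]

lemma hasDerivAt_stdNormalCDF (x : ℝ) : HasDerivAt stdNormalCDF (stdGaussianPDF x) x := by
  have h : stdNormalCDF = fun y => stdNormalCDF 0 + ∫ t in (0 : ℝ)..y, stdGaussianPDF t := by
    ext y
    rw [stdNormalCDF, stdNormalCDF, ← intervalIntegral.integral_Iic_sub_Iic
      integrable_stdGaussianPDF.integrableOn integrable_stdGaussianPDF.integrableOn]
    ring
  rw [h]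
  exact (intervalIntegral.integral_hasDerivAt_right integrable_stdGaussianPDF.intervalIntegrable
    (continuous_stdGaussianPDF.stronglyMeasurableAtFilter _ _)
    continuous_stdGaussianPDF.continuousAt).const_add _

@[fun_prop]
lemma continuous_stdNormalCDF : Continuous stdNormalCDF :=
  continuous_iff_continuousAt.2 fun x => (hasDerivAt_stdNormalCDF x).continuousAt

lemma stdNormalCDF_nonneg (x : ℝ) : 0 ≤ stdNormalCDF x := by
  rw [stdNormalCDF_eq_cdf]; exact cdf_nonneg _ x

lemma stdNormalCDF_le_one (x : ℝ) : stdNormalCDF x ≤ 1 := by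
  rw [stdNormalCDF_eq_cdf]; exact cdf_le_one _ x

lemma tendsto_stdNormalCDF_atTop : Tendsto stdNormalCDF atTop (𝓝 1) := by
  rw [stdNormalCDF_eq_cdf]; exact tendsto_cdf_atTop _

lemma tendsto_stdNormalCDF_atBot : Tendsto stdNormalCDF atBot (𝓝 0) := by
  rw [stdNormalCDF_eq_cdf]; exact tendsto_cdf_atBot _

lemma integrable_stdGaussianPDF_mul_stdNormalCDF_comp {f : ℝ → ℝ} (hf : Continuous f)
    (s : Set ℝ) : IntegrableOn (fun x => stdGaussianPDF x * stdNormalCDF (f x)) s :=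
  integrable_stdGaussianPDF.integrableOn.mul_bdd (by fun_prop) (ae_of_all _ fun x => by
    rw [norm_of_nonneg (stdNormalCDF_nonneg _)]; exact stdNormalCDF_le_one _)

lemma bivStdNormalCDF_eq_integral (a b ρ : ℝ) :
    bivStdNormalCDF a b ρ = ∫ x in Iic a,
      stdGaussianPDF x * ∫ y in {y | ρ * x + √(1 - ρ ^ 2) * y ≤ b}, stdGaussianPDF y := by
  set S := {q : ℝ × ℝ | q.1 ≤ a ∧ ρ * q.1 + √(1 - ρ ^ 2) * q.2 ≤ b}
  have hS : MeasurableSet S :=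
    (isClosed_le continuous_fst continuous_const).measurableSet.inter
      (isClosed_le (f := fun q : ℝ × ℝ => ρ * q.1 + √(1 - ρ ^ 2) * q.2) (by fun_prop)
        continuous_const).measurableSet
  have hT (x : ℝ) : MeasurableSet {y | ρ * x + √(1 - ρ ^ 2) * y ≤ b} :=
    (isClosed_le (by fun_prop) (by fun_prop)).measurableSet
  have hslice (x y : ℝ) : S.indicator (fun q => stdGaussianPDF q.1 * stdGaussianPDF q.2) (x, y) =
      (Iic a).indicator (fun x => stdGaussianPDF x *
        {y | ρ * x + √(1 - ρ ^ 2) * y ≤ b}.indicator stdGaussianPDF y) x := by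
    by_cases hx : x ≤ a <;> by_cases hy : ρ * x + √(1 - ρ ^ 2) * y ≤ b <;>
      simp [S, indicator, hx, hy]
  rw [bivStdNormalCDF, ← integral_indicator hS, Measure.volume_eq_prod,
    integral_prod _ ((integrable_stdGaussianPDF.mul_prod integrable_stdGaussianPDF).indicator hS),
    ← integral_indicator measurableSet_Iic]
  congr 1 with x
  simp_rw [hslice]
  by_cases hx : x ≤ a
  · simp only [indicator_of_mem (mem_Iic.2 hx)]
    rw [integral_const_mul, integral_indicator (hT x)]
  · simp [indicator_of_notMem (notMem_Iic.2 (not_le.1 hx))]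

/-- Given `X = x`, the event `ρ X + √(1 - ρ²) Y ≤ b` is `Y ≤ condThreshold ρ b x`. -/
noncomputable def condThreshold (ρ b x : ℝ) : ℝ := (b - ρ * x) / √(1 - ρ ^ 2)

@[fun_prop]
lemma continuous_condThreshold (ρ b : ℝ) : Continuous (condThreshold ρ b) := by
  unfold condThreshold; fun_prop

lemma bivStdNormalCDF_eq_integral_of_abs_lt (a b : ℝ) {ρ : ℝ} (hρ : |ρ| < 1) :
    bivStdNormalCDF a b ρ =
      ∫ x in Iic a, stdGaussianPDF x * stdNormalCDF (condThreshold ρ b x) := by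
  have hs : 0 < √(1 - ρ ^ 2) := sqrt_pos.2 (one_sub_sq_pos_of_abs_lt hρ)
  rw [bivStdNormalCDF_eq_integral]
  congr 1 with x
  have : {y | ρ * x + √(1 - ρ ^ 2) * y ≤ b} = Iic ((b - ρ * x) / √(1 - ρ ^ 2)) := by
    ext y
    rw [mem_ofPred_eq, mem_Iic, le_div_iff₀ hs]
    constructor <;> intro h <;> linarith
  rw [this, stdNormalCDF, condThreshold]

lemma bivStdNormalCDF_eq_integral_of_sq_eq_one (a b : ℝ) {ρ : ℝ} (hρ : ρ ^ 2 = 1) :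
    bivStdNormalCDF a b ρ = ∫ x in Iic a, stdGaussianPDF x * if ρ * x ≤ b then 1 else 0 := by
  rw [bivStdNormalCDF_eq_integral]
  congr 1 with x
  split_ifs with h
  · simp [hρ, h, integral_stdGaussianPDF]
  · simp [hρ, h]

lemma bivStdNormalCDF_zero (a b : ℝ) :
    bivStdNormalCDF a b 0 = stdNormalCDF a * stdNormalCDF b := by
  simp [bivStdNormalCDF_eq_integral_of_abs_lt a b (abs_zero.trans_lt one_pos), integral_mul_const,
    condThreshold, stdNormalCDF]

lemma integrable_exp_neg_sq_add_sq_div_four (b : ℝ) :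
    Integrable fun x => exp (-(x ^ 2 + b ^ 2) / 4) := by
  refine ((integrable_exp_neg_mul_sq (by norm_num : (0 : ℝ) < 1 / 4)).mul_const
    (exp (-b ^ 2 / 4))).congr (ae_of_all _ fun x => ?_)
  dsimp only; rw [← exp_add]; ring_nf

lemma integrable_abs_add_abs_mul_exp_neg_sq_add_sq_div_four (b : ℝ) :
    Integrable fun x => (|b| + |x|) * exp (-(x ^ 2 + b ^ 2) / 4) := by
  have hx : Integrable fun x => |x| * exp (-(x ^ 2 + b ^ 2) / 4) := by
    refine ((integrable_mul_exp_neg_mul_sq (by norm_num : (0 : ℝ) < 1 / 4)).norm.mul_const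
      (exp (-b ^ 2 / 4))).congr (ae_of_all _ fun x => ?_)
    dsimp only
    rw [norm_mul, norm_of_nonneg (exp_pos _).le, norm_eq_abs, mul_assoc, ← exp_add]
    ring_nf
  simp only [add_mul]
  exact ((integrable_exp_neg_sq_add_sq_div_four b).const_mul |b|).add hx

noncomputable def bivStdGaussianPDF (ρ x y : ℝ) : ℝ :=
  (2 * π * √(1 - ρ ^ 2))⁻¹ * exp (-(x ^ 2 - 2 * ρ * x * y + y ^ 2) / (2 * (1 - ρ ^ 2)))

lemma bivStdGaussianPDF_nonneg (t x y : ℝ) : 0 ≤ bivStdGaussianPDF t x y := by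
  unfold bivStdGaussianPDF; positivity

lemma hasDerivAt_bivStdGaussianPDF_left (t x y : ℝ) :
    HasDerivAt (fun x => bivStdGaussianPDF t x y)
      (bivStdGaussianPDF t x y * ((t * y - x) / (1 - t ^ 2))) x := by
  have hq : HasDerivAt (fun x => -(x ^ 2 - 2 * t * x * y + y ^ 2) / (2 * (1 - t ^ 2)))
      ((t * y - x) / (1 - t ^ 2)) x := by
    refine ((((hasDerivAt_pow 2 x).sub (((hasDerivAt_id x).const_mul (2 * t)).mul_const y))
      |>.add_const (y ^ 2)).neg.div_const (2 * (1 - t ^ 2))).congr_deriv ?_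
    rw [mul_comm (2 : ℝ), ← div_div]; simp only [Nat.cast_ofNat]; ring
  exact (hq.exp.const_mul (2 * π * √(1 - t ^ 2))⁻¹).congr_deriv
    (by rw [bivStdGaussianPDF]; ring)

section Plackett

variable {t : ℝ}

lemma bivStdGaussianPDF_le (ht : |t| < 1) (x y : ℝ) :
    bivStdGaussianPDF t x y ≤ (2 * π * √(1 - t ^ 2))⁻¹ * exp (-(x ^ 2 + y ^ 2) / 4) := by
  have hpos := one_sub_sq_pos_of_abs_lt ht
  refine mul_le_mul_of_nonneg_left (exp_le_exp.2 ?_) (by positivity)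
  rw [div_le_div_iff₀ (by positivity) (by norm_num)]
  -- `2 (x² - 2txy + y²) - (1 - t²)(x² + y²) = (tx - y)² + (x - ty)²`
  nlinarith [sq_nonneg (t * x - y), sq_nonneg (x - t * y)]

lemma continuousAt_bivStdGaussianPDF (ht : |t| < 1) (x y : ℝ) :
    ContinuousAt (fun t => bivStdGaussianPDF t x y) t := by
  have hpos := one_sub_sq_pos_of_abs_lt ht
  unfold bivStdGaussianPDF
  refine ContinuousAt.mul ?_ ?_
  · exact ContinuousAt.inv₀ (by fun_prop) (by positivity)
  · exact (ContinuousAt.div (by fun_prop) (by fun_prop) (by positivity)).rexp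

lemma hasDerivAt_condThreshold (ht : |t| < 1) (b x : ℝ) :
    HasDerivAt (fun t => condThreshold t b x) ((t * b - x) / √(1 - t ^ 2) ^ 3) t := by
  have hpos := one_sub_sq_pos_of_abs_lt ht
  have hs : 0 < √(1 - t ^ 2) := sqrt_pos.2 hpos
  have hden : HasDerivAt (fun t => √(1 - t ^ 2)) (-t / √(1 - t ^ 2)) t := by
    refine (((hasDerivAt_pow 2 t).const_sub 1).sqrt hpos.ne').congr_deriv ?_
    field_simp
    norm_num
  refine ((((hasDerivAt_id t).mul_const x).const_sub b).div hden hs.ne').congr_deriv ?_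
  field_simp
  rw [sq_sqrt hpos.le, id]
  ring

lemma stdGaussianPDF_mul_stdGaussianPDF_condThreshold (ht : |t| < 1) (x y : ℝ) :
    stdGaussianPDF x * stdGaussianPDF (condThreshold t y x) =
      √(1 - t ^ 2) * bivStdGaussianPDF t x y := by
  have hpos := one_sub_sq_pos_of_abs_lt ht
  have hexp : -x ^ 2 / 2 + -condThreshold t y x ^ 2 / 2 =
      -(x ^ 2 - 2 * t * x * y + y ^ 2) / (2 * (1 - t ^ 2)) := by
    rw [condThreshold, div_pow, sq_sqrt hpos.le]
    field_simp
    ring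
  have hc : (√(2 * π))⁻¹ * (√(2 * π))⁻¹ = (2 * π)⁻¹ := by
    rw [← mul_inv, mul_self_sqrt two_pi_pos.le]
  rw [stdGaussianPDF, stdGaussianPDF, bivStdGaussianPDF, mul_mul_mul_comm, ← exp_add, hexp, hc]
  field_simp

lemma abs_deriv_bivStdGaussianPDF_left_le {r : ℝ} (hr : |t| ≤ r) (hr1 : r < 1) (x b : ℝ) :
    |bivStdGaussianPDF t x b * ((t * b - x) / (1 - t ^ 2))| ≤
      (2 * π * √(1 - r ^ 2))⁻¹ * (1 - r ^ 2)⁻¹ * ((|b| + |x|) * exp (-(x ^ 2 + b ^ 2) / 4)) := by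
  have ht : |t| < 1 := hr.trans_lt hr1
  have hr0 : |r| < 1 := by rwa [abs_of_nonneg ((abs_nonneg t).trans hr)]
  have hrpos := one_sub_sq_pos_of_abs_lt hr0
  have htr : 1 - r ^ 2 ≤ 1 - t ^ 2 := by nlinarith [sq_abs t, abs_nonneg t]
  have hnum : |t * b - x| ≤ |b| + |x| := by
    calc |t * b - x| ≤ |t| * |b| + |x| := by rw [← abs_mul]; exact abs_sub _ _
      _ ≤ |b| + |x| := by nlinarith [abs_nonneg b]
  have htpos := one_sub_sq_pos_of_abs_lt ht
  rw [abs_mul, abs_of_nonneg (bivStdGaussianPDF_nonneg _ _ _), abs_div, abs_of_pos htpos]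
  calc bivStdGaussianPDF t x b * (|t * b - x| / (1 - t ^ 2))
      ≤ (2 * π * √(1 - t ^ 2))⁻¹ * exp (-(x ^ 2 + b ^ 2) / 4) * ((|b| + |x|) / (1 - t ^ 2)) :=
        by gcongr; exact bivStdGaussianPDF_le ht x b
    _ ≤ (2 * π * √(1 - r ^ 2))⁻¹ * exp (-(x ^ 2 + b ^ 2) / 4) * ((|b| + |x|) / (1 - r ^ 2)) :=
        by gcongr
    _ = _ := by ring

lemma integral_Iic_deriv_bivStdGaussianPDF_left (ht : |t| < 1) (a b : ℝ) :
    ∫ x in Iic a, bivStdGaussianPDF t x b * ((t * b - x) / (1 - t ^ 2)) =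
      bivStdGaussianPDF t a b := by
  have hderiv (x : ℝ) (_ : x ∈ Iic a) := hasDerivAt_bivStdGaussianPDF_left t x b
  have hint : IntegrableOn (fun x => bivStdGaussianPDF t x b) (Iic a) :=
    (((integrable_exp_neg_sq_add_sq_div_four b).const_mul (2 * π * √(1 - t ^ 2))⁻¹).mono'
      (continuous_iff_continuousAt.2 fun x =>
        (hasDerivAt_bivStdGaussianPDF_left t x b).continuousAt).aestronglyMeasurable
      (ae_of_all _ fun x => by
        rw [norm_of_nonneg (bivStdGaussianPDF_nonneg _ _ _)]
        exact bivStdGaussianPDF_le ht x b)).integrableOn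
  have hint' :
      IntegrableOn (fun x => bivStdGaussianPDF t x b * ((t * b - x) / (1 - t ^ 2))) (Iic a) :=
    ((integrable_abs_add_abs_mul_exp_neg_sq_add_sq_div_four b).const_mul _).mono'
      (by unfold bivStdGaussianPDF; fun_prop) (ae_of_all _ fun x => by
        rw [norm_eq_abs]; exact abs_deriv_bivStdGaussianPDF_left_le le_rfl ht x b) |>.integrableOn
  rw [integral_Iic_of_hasDerivAt_of_tendsto' hderiv hint'
    (tendsto_zero_of_hasDerivAt_of_integrableOn_Iic hderiv hint' hint), sub_zero]

lemma hasDerivAt_stdGaussianPDF_mul_stdNormalCDF_condThreshold (ht : |t| < 1) (b x : ℝ) :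
    HasDerivAt (fun t => stdGaussianPDF x * stdNormalCDF (condThreshold t b x))
      (bivStdGaussianPDF t x b * ((t * b - x) / (1 - t ^ 2))) t := by
  have hpos := one_sub_sq_pos_of_abs_lt ht
  refine (((hasDerivAt_stdNormalCDF _).comp t (hasDerivAt_condThreshold ht b x)).const_mul
    (stdGaussianPDF x)).congr_deriv ?_
  rw [← mul_assoc, stdGaussianPDF_mul_stdGaussianPDF_condThreshold ht]
  field_simp
  rw [sq_sqrt hpos.le]

theorem hasDerivAt_bivStdNormalCDF (a b : ℝ) (ht : |t| < 1) :
    HasDerivAt (bivStdNormalCDF a b) (bivStdGaussianPDF t a b) t := by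
  obtain ⟨r, htr, hr1⟩ := exists_between ht
  have hnhds : Ioo (-r) r ∈ 𝓝 t := Ioo_mem_nhds (by linarith [neg_abs_le t]) (lt_of_abs_lt htr)
  have hK := (hasDerivAt_integral_of_dominated_loc_of_deriv_le (μ := volume.restrict (Iic a))
    (F := fun s x => stdGaussianPDF x * stdNormalCDF (condThreshold s b x))
    (F' := fun s x => bivStdGaussianPDF s x b * ((s * b - x) / (1 - s ^ 2))) hnhds
    (Eventually.of_forall fun s =>
      (integrable_stdGaussianPDF_mul_stdNormalCDF_comp (continuous_condThreshold s b)
        _).aestronglyMeasurable)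
    (integrable_stdGaussianPDF_mul_stdNormalCDF_comp (continuous_condThreshold t b) _)
    (by unfold bivStdGaussianPDF; fun_prop : Continuous _).aestronglyMeasurable
    (ae_of_all _ fun x s hs =>
      abs_deriv_bivStdGaussianPDF_left_le (abs_le.2 ⟨hs.1.le, hs.2.le⟩) hr1 x b)
    ((integrable_abs_add_abs_mul_exp_neg_sq_add_sq_div_four b).const_mul _).integrableOn
    (ae_of_all _ fun x s hs => hasDerivAt_stdGaussianPDF_mul_stdNormalCDF_condThreshold
      ((abs_le.2 ⟨hs.1.le, hs.2.le⟩).trans_lt hr1) b x)).2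
  rw [integral_Iic_deriv_bivStdGaussianPDF_left ht] at hK
  refine hK.congr_of_eventuallyEq ?_
  filter_upwards [Ioo_mem_nhds (abs_lt.1 ht).1 (abs_lt.1 ht).2] with s hs
  exact bivStdNormalCDF_eq_integral_of_abs_lt a b (abs_lt.2 hs)

end Plackett

lemma abs_arcsin_le (x : ℝ) : |arcsin x| ≤ π / 2 * |x| := by
  wlog hx : 0 ≤ x generalizing x
  · simpa [arcsin_neg] using this (-x) (by linarith)
  rw [abs_of_nonneg (arcsin_nonneg.2 hx), abs_of_nonneg hx]
  rcases le_or_gt 1 x with h1 | h1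
  · rw [arcsin_of_one_le h1]; nlinarith [pi_pos]
  · have hJordan := mul_le_sin (arcsin_nonneg.2 hx) (arcsin_le_pi_div_two x)
    rw [sin_arcsin (by linarith) h1.le] at hJordan
    have hπ := pi_pos
    calc arcsin x = π / 2 * (2 / π * arcsin x) := by field_simp
      _ ≤ π / 2 * x := by gcongr

lemma abs_lt_one_of_mem_uIcc {ρ t : ℝ} (hρ : |ρ| < 1) (ht : t ∈ uIcc 0 ρ) : |t| < 1 := by
  simpa using (abs_sub_left_of_mem_uIcc ht).trans_lt (by simpa using hρ)

lemma intervalIntegrable_one_div_sqrt_one_sub_sq {ρ : ℝ} (hρ : |ρ| < 1) :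
    IntervalIntegrable (fun t => 1 / √(1 - t ^ 2)) volume 0 ρ :=
  ContinuousOn.intervalIntegrable fun t ht =>
    (continuousAt_const.div (by fun_prop : ContinuousAt (fun t : ℝ => √(1 - t ^ 2)) t)
      (sqrt_pos.2 (one_sub_sq_pos_of_abs_lt (abs_lt_one_of_mem_uIcc hρ ht))).ne').continuousWithinAt

lemma integral_one_div_sqrt_one_sub_sq {ρ : ℝ} (hρ : |ρ| < 1) :
    ∫ t in (0 : ℝ)..ρ, 1 / √(1 - t ^ 2) = arcsin ρ := by
  have hderiv (t) (ht : t ∈ uIcc 0 ρ) : HasDerivAt arcsin (1 / √(1 - t ^ 2)) t :=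
    have := abs_lt.1 (abs_lt_one_of_mem_uIcc hρ ht)
    hasDerivAt_arcsin this.1.ne' this.2.ne
  rw [intervalIntegral.integral_eq_sub_of_hasDerivAt hderiv
    (intervalIntegrable_one_div_sqrt_one_sub_sq hρ), arcsin_zero, sub_zero]

lemma abs_bivStdNormalCDF_sub_le_of_abs_lt (a b : ℝ) {ρ : ℝ} (hρ : |ρ| < 1) :
    |bivStdNormalCDF a b ρ - stdNormalCDF a * stdNormalCDF b| ≤
      |ρ| / 4 * exp (-(a ^ 2 + b ^ 2) / 4) := by
  set E := exp (-(a ^ 2 + b ^ 2) / 4)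
  have hsub (t) (ht : t ∈ uIcc 0 ρ) : |t| < 1 := abs_lt_one_of_mem_uIcc hρ ht
  have hC : bivStdNormalCDF a b ρ - stdNormalCDF a * stdNormalCDF b =
      ∫ t in (0 : ℝ)..ρ, bivStdGaussianPDF t a b := by
    rw [← bivStdNormalCDF_zero, intervalIntegral.integral_eq_sub_of_hasDerivAt
      (fun t ht => hasDerivAt_bivStdNormalCDF a b (hsub t ht))
      (ContinuousOn.intervalIntegrable fun t ht =>
        (continuousAt_bivStdGaussianPDF (hsub t ht) a b).continuousWithinAt)]
  have hbound (t) (ht : t ∈ uIoc 0 ρ) :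
      ‖bivStdGaussianPDF t a b‖ ≤ (2 * π)⁻¹ * E * (1 / √(1 - t ^ 2)) := by
    rw [norm_of_nonneg (bivStdGaussianPDF_nonneg _ _ _)]
    refine (bivStdGaussianPDF_le (hsub t (uIoc_subset_uIcc ht)) a b).trans_eq ?_
    rw [mul_inv]; ring
  have hπ := pi_pos
  calc |bivStdNormalCDF a b ρ - stdNormalCDF a * stdNormalCDF b|
      ≤ |∫ t in (0 : ℝ)..ρ, (2 * π)⁻¹ * E * (1 / √(1 - t ^ 2))| := by
        rw [hC]
        refine intervalIntegral.norm_integral_le_abs_of_norm_le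
          (ae_restrict_of_forall_mem measurableSet_uIoc hbound)
          ((intervalIntegrable_one_div_sqrt_one_sub_sq hρ).const_mul _)
    _ = (2 * π)⁻¹ * E * |arcsin ρ| := by
        rw [intervalIntegral.integral_const_mul, integral_one_div_sqrt_one_sub_sq hρ, abs_mul,
          abs_of_pos (by positivity)]
    _ ≤ (2 * π)⁻¹ * E * (π / 2 * |ρ|) := by gcongr; exact abs_arcsin_le ρ
    _ = |ρ| / 4 * E := by field_simp; ring

lemma continuousWithinAt_bivStdNormalCDF_of_sq_eq_one (a b : ℝ) {ρ : ℝ} (hρ : ρ ^ 2 = 1) :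
    ContinuousWithinAt (bivStdNormalCDF a b) (Ioo (-1) 1) ρ := by
  have hinv : Tendsto (fun t => (√(1 - t ^ 2))⁻¹) (𝓝[Ioo (-1) 1] ρ) atTop := by
    refine tendsto_inv_nhdsGT_zero.comp (tendsto_nhdsWithin_iff.2 ⟨?_, ?_⟩)
    · have : Tendsto (fun t : ℝ => √(1 - t ^ 2)) (𝓝 ρ) (𝓝 0) := by
        simpa [hρ] using ((by fun_prop : Continuous fun t : ℝ => √(1 - t ^ 2)).tendsto ρ)
      exact this.mono_left nhdsWithin_le_nhds
    · filter_upwards [self_mem_nhdsWithin] with t ht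
      exact sqrt_pos.2 (one_sub_sq_pos_of_abs_lt (abs_lt.2 ht))
  have hae : ∀ᵐ x ∂volume.restrict (Iic a), ρ * x ≠ b := by
    filter_upwards [ae_restrict_of_ae (volume.ae_ne (ρ * b))] with x hx hxb
    exact hx (by rw [← hxb, ← mul_assoc, ← sq, hρ, one_mul])
  rw [ContinuousWithinAt, bivStdNormalCDF_eq_integral_of_sq_eq_one a b hρ]
  refine Tendsto.congr' (eventually_nhdsWithin_of_forall fun t ht =>
    (bivStdNormalCDF_eq_integral_of_abs_lt a b (abs_lt.2 ht)).symm) ?_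
  refine tendsto_integral_filter_of_dominated_convergence stdGaussianPDF
    (Eventually.of_forall fun t => (integrable_stdGaussianPDF_mul_stdNormalCDF_comp
      (continuous_condThreshold t b) _).aestronglyMeasurable)
    (Eventually.of_forall fun t => ae_of_all _ fun x => ?_)
    integrable_stdGaussianPDF.integrableOn ?_
  · rw [norm_of_nonneg (mul_nonneg (stdGaussianPDF_nonneg x) (stdNormalCDF_nonneg _))]
    exact mul_le_of_le_one_right (stdGaussianPDF_nonneg x) (stdNormalCDF_le_one _)
  filter_upwards [hae] with x hx
  refine Tendsto.const_mul _ ?_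
  have hnum : Tendsto (fun t => b - t * x) (𝓝[Ioo (-1) 1] ρ) (𝓝 (b - ρ * x)) :=
    ((by fun_prop : Continuous fun t => b - t * x).tendsto ρ).mono_left nhdsWithin_le_nhds
  simp only [condThreshold, div_eq_mul_inv]
  rcases hx.lt_or_gt with h | h
  · rw [if_pos h.le]
    exact tendsto_stdNormalCDF_atTop.comp (hnum.pos_mul_atTop (by linarith) hinv)
  · rw [if_neg h.not_ge]
    exact tendsto_stdNormalCDF_atBot.comp (hnum.neg_mul_atTop (by linarith) hinv)

lemma continuousWithinAt_bivStdNormalCDF (a b : ℝ) {ρ : ℝ} (hρ : ρ ∈ Icc (-1) 1) :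
    ContinuousWithinAt (bivStdNormalCDF a b) (Ioo (-1) 1) ρ := by
  rcases (abs_le.2 hρ).lt_or_eq with h | h
  · exact (hasDerivAt_bivStdNormalCDF a b h).continuousAt.continuousWithinAt
  · exact continuousWithinAt_bivStdNormalCDF_of_sq_eq_one a b (by rw [← sq_abs, h, one_pow])

/-- The Gaussian copula term `C(a,b,ρ) = Φ₂(a,b,ρ) − Φ(a)Φ(b)` satisfies
`|C(a,b,ρ)| ≤ (|ρ|/4) exp(−(a²+b²)/4)` for all `a, b ∈ ℝ` and `ρ ∈ [−1,1]`. -/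
theorem gaussian_copula_bound (a b ρ : ℝ) (hρ : ρ ∈ Set.Icc (-1 : ℝ) 1) :
    |bivStdNormalCDF a b ρ - stdNormalCDF a * stdNormalCDF b| ≤
      |ρ| / 4 * Real.exp (-(a ^ 2 + b ^ 2) / 4) := by
  refine ContinuousWithinAt.closure_le (by rwa [closure_Ioo (by norm_num)])
    ((continuousWithinAt_bivStdNormalCDF a b hρ).sub continuousWithinAt_const).abs
    (by fun_prop : Continuous fun t : ℝ => |t| / 4 * exp (-(a ^ 2 + b ^ 2) / 4)).continuousWithinAt
    fun t ht => abs_bivStdNormalCDF_sub_le_of_abs_lt a b (abs_lt.2 ht)
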